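/- arXiv:1011.1576 — 11 statements merged into one kernel-verified Lean document; each statement's English description precedes it below -/
import Mathlib

section
/- Let p, y ∈ ℝ, n > 0, η > 0, and define s : ℝ → ℝ by s(h) = ((p − y)/n)·(1 − exp(−h·η·n)). Then s(0) = 0 and s is differentiable with s'(h) = η·((p − s(h)·n) − y) for all h, i.e., s solves the importance-invariant ODE for the squared loss. -/
/-! With `k = η n` and `c = (p − y)/n`, the ODE reads `s' = k (c − s)`, a linear relaxation
towards `c` at rate `k`, whose solution vanishing at `0` is `c (1 − e^{−k h})`. -/

open Real

theorem hasDerivAt_relaxation (c k h : ℝ) :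
    HasDerivAt (fun t => c * (1 - exp (-(t * k)))) (k * (c - c * (1 - exp (-(h * k))))) h := by
  have hexp : HasDerivAt (fun t => exp (-(t * k))) (exp (-(h * k)) * -k) h := by
    simpa using ((hasDerivAt_mul_const k).neg).exp
  exact ((hexp.const_sub 1).const_mul c).congr_deriv (by ring)

theorem stmt_4_general (p y n η : ℝ) (hn : 0 < n)
    (s : ℝ → ℝ)
    (hs : ∀ h : ℝ, s h = ((p - y) / n) * (1 - Real.exp (-(h * η * n)))) :
    s 0 = 0 ∧ ∀ h : ℝ, HasDerivAt s (η * ((p - s h * n) - y)) h := by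
  have hs' : s = fun t => (p - y) / n * (1 - exp (-(t * (η * n)))) := by
    funext t
    rw [hs, mul_assoc]
  refine ⟨by simp [hs'], fun h => ?_⟩
  rw [hs']
  refine (hasDerivAt_relaxation ((p - y) / n) (η * n) h).congr_deriv ?_
  field_simp
  ring

/-- The closed-form importance-invariant update for the squared loss solves the
importance-invariant ODE `s'(h) = η((p − s(h)n) − y)`, `s(0) = 0`. -/
theorem stmt_4 (p y n η : ℝ) (hn : 0 < n) (hη : 0 < η)
    (s : ℝ → ℝ)
    (hs : ∀ h : ℝ, s h = ((p - y) / n) * (1 - Real.exp (-(h * η * n)))) :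
    s 0 = 0 ∧ ∀ h : ℝ, HasDerivAt s (η * ((p - s h * n) - y)) h :=
  stmt_4_general p y n η hn s hs
end

section
/- Let p ∈ ℝ, y ∈ {−1, 1}, n > 0, η > 0, and define s : [0, ∞) → ℝ by s(h) = (p·y − log(h·η·n + exp(p·y)))/(n·y). Then s(0) = 0 and s is differentiable with s'(h) = −η·y·exp(−y·(p − s(h)·n)) for all h ≥ 0, i.e., s solves the importance-invariant ODE for the exponential loss. -/
/-! Write `A(h) = h·η·n + exp(p·y)`, positive for `h ≥ 0`. The margin after the update is
`y·(p − s(h)·n) = log A(h)`, so the right-hand side of the ODE is `−η·y / A(h)`; differentiating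
the closed form gives `−η·n / (A(h)·n·y)`, which is the same because `y² = 1`. -/

open Real

noncomputable def expLossStep (p y n η h : ℝ) : ℝ :=
  (p * y - log (h * η * n + exp (p * y))) / (n * y)

section ExpLossStep

variable {p y n η : ℝ}

theorem expLossStep_zero : expLossStep p y n η 0 = 0 := by
  simp [expLossStep]

theorem mul_sub_expLossStep_mul (hy : y ≠ 0) (hn : n ≠ 0) (h : ℝ) :
    y * (p - expLossStep p y n η h * n) = log (h * η * n + exp (p * y)) := by
  unfold expLossStep
  field_simp
  ring

theorem hasDerivAt_expLossStep (hy : y * y = 1) (hn : n ≠ 0) {h : ℝ}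
    (hpos : 0 < h * η * n + exp (p * y)) :
    HasDerivAt (expLossStep p y n η) (-(η * y / (h * η * n + exp (p * y)))) h := by
  have hlin : HasDerivAt (fun h ↦ h * η * n + exp (p * y)) (η * n) h := by
    simpa using (((hasDerivAt_id h).mul_const η).mul_const n).add_const (exp (p * y))
  refine (((hlin.log hpos.ne').const_sub (p * y)).div_const (n * y)).congr_deriv ?_
  have hy0 : y ≠ 0 := left_ne_zero_of_mul_eq_one hy
  field_simp [hpos.ne']
  rw [sq, hy, mul_one]

theorem hasDerivAt_expLossStep_eq_ode (hy : y * y = 1) (hn : n ≠ 0) {h : ℝ}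
    (hpos : 0 < h * η * n + exp (p * y)) :
    HasDerivAt (expLossStep p y n η)
      (-(η * y * exp (-(y * (p - expLossStep p y n η h * n))))) h := by
  rw [mul_sub_expLossStep_mul (left_ne_zero_of_mul_eq_one hy) hn, exp_neg, exp_log hpos,
    ← div_eq_mul_inv]
  exact hasDerivAt_expLossStep hy hn hpos

end ExpLossStep

/-- The closed-form importance-invariant update for the exponential loss solves the
importance-invariant ODE `s'(h) = −η·y·exp(−y(p − s(h)n))`, `s(0) = 0`, for `h ≥ 0`. -/
theorem stmt_5 (p y n η : ℝ) (hy : y = -1 ∨ y = 1) (hn : 0 < n) (hη : 0 < η)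
    (s : ℝ → ℝ)
    (hs : ∀ h : ℝ, s h = (p * y - Real.log (h * η * n + Real.exp (p * y))) / (n * y)) :
    s 0 = 0 ∧
      ∀ h : ℝ, 0 ≤ h → HasDerivAt s (-(η * y * Real.exp (-(y * (p - s h * n))))) h := by
  obtain rfl : s = expLossStep p y n η := funext hs
  have hy2 : y * y = 1 := mul_self_eq_one_iff.mpr hy.symm
  refine ⟨expLossStep_zero, fun h hh ↦ hasDerivAt_expLossStep_eq_ode hy2 hn.ne' ?_⟩
  positivity
end

section
/- Let n > 0, η > 0, and p ∈ (0, 1). (i) Define s₀ : [0, ∞) → ℝ by s₀(h) = (p − 1 + √((p − 1)² + 2·h·η·n))/n. Then s₀(0) = 0 and s₀'(h) = η/(1 − (p − s₀(h)·n)) for all h ≥ 0. (ii) Define s₁ : [0, H) → ℝ by s₁(h) = (p − √(p² + 2·h·η·n))/n on any interval where p² + 2hηn > 0. Then s₁(0) = 0 and s₁'(h) = −η/(p − s₁(h)·n). -/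
/-!
Both updates are affine in `√(a ^ 2 + 2 h η n)` with `a = 1 - p` resp. `a = p`, and along the
solution the quantity `1 - q` resp. `q` (where `q = p - s n`) is exactly that square root.
Since `d/dh √(a ^ 2 + 2 h η n) = η n / √(a ^ 2 + 2 h η n)`, dividing by `n` gives the ODE.
-/

lemma hasDerivAt_sqrt_add_two_mul_mul {c η n h : ℝ} (hpos : 0 < c + 2 * h * η * n) :
    HasDerivAt (fun x => √(c + 2 * x * η * n)) (η * n / √(c + 2 * h * η * n)) h := by
  have hinner : HasDerivAt (fun x => c + 2 * x * η * n) (2 * η * n) h := by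
    simpa [mul_comm, mul_left_comm, mul_assoc] using
      ((hasDerivAt_id h).const_mul (2 * η * n)).const_add c
  refine ((Real.hasDerivAt_sqrt hpos.ne').comp h hinner).congr_deriv ?_
  have : √(c + 2 * h * η * n) ≠ 0 := (Real.sqrt_pos.mpr hpos).ne'
  field_simp

section LogLossUpdate

variable {p n η : ℝ}

lemma logLossUpdate_zero_apply_zero (hp : p < 1) :
    (p - 1 + √((p - 1) ^ 2 + 2 * 0 * η * n)) / n = 0 := by
  rw [mul_zero, zero_mul, zero_mul, add_zero, Real.sqrt_sq_eq_abs, abs_of_neg (by linarith)]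
  simp

lemma logLossUpdate_one_apply_zero (hp : 0 < p) :
    (p - √(p ^ 2 + 2 * 0 * η * n)) / n = 0 := by
  rw [mul_zero, zero_mul, zero_mul, add_zero, Real.sqrt_sq hp.le]
  simp

lemma hasDerivAt_logLossUpdate_zero (hn : 0 < n) (hη : 0 ≤ η) (hp : p < 1) {h : ℝ}
    (hh : 0 ≤ h) :
    HasDerivAt (fun x => (p - 1 + √((p - 1) ^ 2 + 2 * x * η * n)) / n)
      (η / (1 - (p - (p - 1 + √((p - 1) ^ 2 + 2 * h * η * n)) / n * n))) h := by
  have hpos : 0 < (p - 1) ^ 2 + 2 * h * η * n := by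
    have : p - 1 ≠ 0 := by linarith
    positivity
  have hsqrt : 1 - (p - (p - 1 + √((p - 1) ^ 2 + 2 * h * η * n)) / n * n)
      = √((p - 1) ^ 2 + 2 * h * η * n) := by
    rw [div_mul_cancel₀ _ hn.ne']
    ring
  rw [hsqrt]
  refine (((hasDerivAt_sqrt_add_two_mul_mul hpos).const_add (p - 1)).div_const n).congr_deriv ?_
  field_simp

lemma hasDerivAt_logLossUpdate_one (hn : 0 < n) {h : ℝ} (hpos : 0 < p ^ 2 + 2 * h * η * n) :
    HasDerivAt (fun x => (p - √(p ^ 2 + 2 * x * η * n)) / n)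
      (-(η / (p - (p - √(p ^ 2 + 2 * h * η * n)) / n * n))) h := by
  have hsqrt : p - (p - √(p ^ 2 + 2 * h * η * n)) / n * n = √(p ^ 2 + 2 * h * η * n) := by
    rw [div_mul_cancel₀ _ hn.ne']
    ring
  rw [hsqrt]
  refine (((hasDerivAt_sqrt_add_two_mul_mul hpos).const_sub p).div_const n).congr_deriv ?_
  field_simp

end LogLossUpdate

/-- Closed-form importance-invariant updates for the logarithmic loss with `y ∈ {0,1}`:
they satisfy `s(0) = 0` and the importance-invariant ODE. -/
theorem stmt_6 (p n η : ℝ) (hn : 0 < n) (hη : 0 < η) (hp : p ∈ Set.Ioo (0 : ℝ) 1)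
    (s₀ s₁ : ℝ → ℝ)
    (hs₀ : ∀ h : ℝ, s₀ h = (p - 1 + Real.sqrt ((p - 1) ^ 2 + 2 * h * η * n)) / n)
    (hs₁ : ∀ h : ℝ, s₁ h = (p - Real.sqrt (p ^ 2 + 2 * h * η * n)) / n) :
    (s₀ 0 = 0 ∧
      ∀ h : ℝ, 0 ≤ h → HasDerivAt s₀ (η / (1 - (p - s₀ h * n))) h) ∧
    (s₁ 0 = 0 ∧
      ∀ h : ℝ, 0 ≤ h → 0 < p ^ 2 + 2 * h * η * n →
        HasDerivAt s₁ (-(η / (p - s₁ h * n))) h) := by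
  obtain ⟨hp0, hp1⟩ := hp
  obtain rfl : s₀ = _ := funext hs₀
  obtain rfl : s₁ = _ := funext hs₁
  exact ⟨⟨logLossUpdate_zero_apply_zero hp1,
      fun _ hh => hasDerivAt_logLossUpdate_zero hn hη.le hp1 hh⟩,
    ⟨logLossUpdate_one_apply_zero hp0, fun _ _ hpos => hasDerivAt_logLossUpdate_one hn hpos⟩⟩
end

section
/- Let n > 0, η > 0, and p ∈ (0, 1). (i) Define s₀ : [0, ∞) → ℝ by s₀(h) = (p − 1 + (1/4)·(12·h·η·n + 8·(1 − p)^{3/2})^{2/3})/n. Then s₀(0) = 0 and s₀'(h) = η/√(1 − (p − s₀(h)·n)) for all h ≥ 0. (ii) Define s₁ : [0, ∞) → ℝ by s₁(h) = (p − (1/4)·(12·h·η·n + 8·p^{3/2})^{2/3})/n. Then s₁(0) = 0 and s₁'(h) = −η/√(p − s₁(h)·n) for all h ≥ 0. -/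
/-!
With `u = 12 h η n + 8 a^{3/2}`, the function `F(h) = ¼ u^{2/3}` satisfies `√F = ½ u^{1/3}`,
hence `F' = 12 η n · (1/6) u^{-1/3} = η n / √F`, and `F(0) = ¼ (8 a^{3/2})^{2/3} = a`.
Both updates are affine in `F` (with `a = 1 - p` resp. `a = p`), and the argument `q = p - s n`
of the loss derivative is exactly `1 - F` resp. `F`.
-/

open Real

noncomputable def hellingerProfile (a η n t : ℝ) : ℝ :=
  1 / 4 * (12 * t * η * n + 8 * a ^ ((3 : ℝ) / 2)) ^ ((2 : ℝ) / 3)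

lemma quarter_mul_eight_mul_rpow_three_halves_rpow_two_thirds {a : ℝ} (ha : 0 ≤ a) :
    1 / 4 * (8 * a ^ ((3 : ℝ) / 2)) ^ ((2 : ℝ) / 3) = a := by
  have h8 : (8 : ℝ) ^ ((2 : ℝ) / 3) = 4 := by
    rw [show (8 : ℝ) = 2 ^ (3 : ℝ) by norm_num, ← rpow_mul (by norm_num)]
    norm_num
  rw [mul_rpow (by norm_num) (rpow_nonneg ha _), ← rpow_mul ha, h8]
  norm_num
  ring

lemma sqrt_quarter_mul_rpow_two_thirds {u : ℝ} (hu : 0 ≤ u) :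
    √(1 / 4 * u ^ ((2 : ℝ) / 3)) = 1 / 2 * u ^ ((1 : ℝ) / 3) := by
  rw [show 1 / 4 * u ^ ((2 : ℝ) / 3) = (1 / 2 * u ^ ((1 : ℝ) / 3)) ^ 2 by
    rw [mul_pow, ← rpow_natCast (u ^ _) 2, ← rpow_mul hu]
    norm_num]
  exact sqrt_sq (by positivity)

lemma hellingerProfile_zero (η n : ℝ) {a : ℝ} (ha : 0 ≤ a) : hellingerProfile a η n 0 = a := by
  simpa [hellingerProfile] using quarter_mul_eight_mul_rpow_three_halves_rpow_two_thirds ha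

lemma hasDerivAt_hellingerProfile {a η n h : ℝ} (ha : 0 < a) (hη : 0 ≤ η) (hn : 0 ≤ n)
    (hh : 0 ≤ h) :
    HasDerivAt (hellingerProfile a η n) (η * n / √(hellingerProfile a η n h)) h := by
  set u := 12 * h * η * n + 8 * a ^ ((3 : ℝ) / 2)
  have hu : 0 < u := by positivity
  have hlin : HasDerivAt (fun t ↦ 12 * t * η * n + 8 * a ^ ((3 : ℝ) / 2)) (12 * η * n) h := by
    simpa [mul_comm, mul_left_comm, mul_assoc] using
      ((hasDerivAt_id h).const_mul (12 * η * n)).add_const (8 * a ^ ((3 : ℝ) / 2))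
  have hF := ((hasDerivAt_rpow_const (p := (2 : ℝ) / 3) (Or.inl hu.ne')).comp h hlin).const_mul
    (1 / 4 : ℝ)
  refine hF.congr_deriv ?_
  have hu3 : 0 < u ^ ((1 : ℝ) / 3) := rpow_pos_of_pos hu _
  rw [hellingerProfile, sqrt_quarter_mul_rpow_two_thirds hu.le,
    show (2 : ℝ) / 3 - 1 = -(1 / 3) by norm_num, rpow_neg hu.le]
  field_simp
  ring

/-- Closed-form importance-invariant updates for the Hellinger loss with `y ∈ {0,1}`:
they satisfy `s(0) = 0` and the importance-invariant ODE. Powers with real exponents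
are `Real.rpow`. -/
theorem stmt_7 (p n η : ℝ) (hn : 0 < n) (hη : 0 < η) (hp : p ∈ Set.Ioo (0 : ℝ) 1)
    (s₀ s₁ : ℝ → ℝ)
    (hs₀ : ∀ h : ℝ, s₀ h =
      (p - 1 + (1 / 4) * (12 * h * η * n + 8 * (1 - p) ^ ((3 : ℝ) / 2)) ^ ((2 : ℝ) / 3)) / n)
    (hs₁ : ∀ h : ℝ, s₁ h =
      (p - (1 / 4) * (12 * h * η * n + 8 * p ^ ((3 : ℝ) / 2)) ^ ((2 : ℝ) / 3)) / n) :
    (s₀ 0 = 0 ∧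
      ∀ h : ℝ, 0 ≤ h → HasDerivAt s₀ (η / Real.sqrt (1 - (p - s₀ h * n))) h) ∧
    (s₁ 0 = 0 ∧
      ∀ h : ℝ, 0 ≤ h → HasDerivAt s₁ (-(η / Real.sqrt (p - s₁ h * n))) h) := by
  obtain ⟨hp0, hp1⟩ := hp
  have hq : 0 < 1 - p := sub_pos.mpr hp1
  obtain rfl : s₀ = fun t ↦ (p - 1 + hellingerProfile (1 - p) η n t) / n := funext hs₀
  obtain rfl : s₁ = fun t ↦ (p - hellingerProfile p η n t) / n := funext hs₁
  refine ⟨⟨?_, fun h hh ↦ ?_⟩, ?_, fun h hh ↦ ?_⟩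
  · simp [hellingerProfile_zero η n hq.le]
  · refine (((hasDerivAt_hellingerProfile hq hη.le hn.le hh).const_add (p - 1)).div_const n
      ).congr_deriv ?_
    rw [div_mul_cancel₀ _ hn.ne', show 1 - (p - (p - 1 + hellingerProfile (1 - p) η n h)) =
      hellingerProfile (1 - p) η n h by ring]
    field_simp
  · simp [hellingerProfile_zero η n hp0.le]
  · refine (((hasDerivAt_hellingerProfile hp0 hη.le hn.le hh).const_sub p).div_const n
      ).congr_deriv ?_
    rw [div_mul_cancel₀ _ hn.ne', sub_sub_cancel]
    field_simp
end

section
/- Let p ∈ ℝ, y ∈ {−1, 1}, n > 0, η > 0, and suppose y·p < 1. Set h* = (1 − y·p)/(η·n) and define s : [0, ∞) → ℝ by s(h) = −y·η·min(h, h*). Then: (i) s is continuous with s(0) = 0; (ii) for all 0 ≤ h < h*, y·(p − s(h)·n) < 1 and s is differentiable at h with s'(h) = −η·y; (iii) for all h > h*, y·(p − s(h)·n) = 1 and s is differentiable at h with s'(h) = 0. -/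
/-!
Before the hinge point `h*`, `min h h*` is `h`, so `s` is linear with slope `-ηy` and the margin
`y·p + η·h·n` grows linearly (using `y² = 1`) until it reaches `1` at `h = h*`; after `h*`, `s` is
constant and the margin stays at `1`.
-/

lemma hasDerivAt_min_const_of_lt {c x : ℝ} (hx : x < c) :
    HasDerivAt (fun t => min t c) 1 x :=
  (hasDerivAt_id x).congr_of_eventuallyEq <|
    (eventually_lt_nhds hx).mono fun _ ht => min_eq_left ht.le

lemma hasDerivAt_min_const_of_gt {c x : ℝ} (hx : c < x) :
    HasDerivAt (fun t => min t c) 0 x :=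
  (hasDerivAt_const x c).congr_of_eventuallyEq <|
    (eventually_gt_nhds hx).mono fun _ ht => min_eq_right ht.le

lemma margin_after_step {y p η n m : ℝ} (hy : y * y = 1) :
    y * (p - -y * η * m * n) = y * p + η * m * n := by
  linear_combination (η * m * n) * hy

/-- The importance-invariant update for the hinge loss: `s(h) = −yη·min(h, h*)` is continuous,
vanishes at `0`, solves the ODE with slope `−ηy` before the hinge point `h*` and slope `0`
after it, where at the hinge point the margin equals exactly `1`. -/
theorem stmt_8 (p y n η : ℝ) (hy : y = -1 ∨ y = 1) (hn : 0 < n) (hη : 0 < η)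
    (hyp : y * p < 1)
    (hstar : ℝ) (hhstar : hstar = (1 - y * p) / (η * n))
    (s : ℝ → ℝ) (hs : ∀ h : ℝ, s h = -y * η * min h hstar) :
    (Continuous s ∧ s 0 = 0) ∧
    (∀ h : ℝ, 0 ≤ h → h < hstar →
      y * (p - s h * n) < 1 ∧ HasDerivAt s (-(η * y)) h) ∧
    (∀ h : ℝ, hstar < h →
      y * (p - s h * n) = 1 ∧ HasDerivAt s 0 h) := by
  have hyy : y * y = 1 := by rcases hy with rfl | rfl <;> norm_num
  have hηn : 0 < η * n := mul_pos hη hn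
  have hstar_pos : 0 < hstar := hhstar ▸ div_pos (by linarith) hηn
  have hmargin_star : y * p + η * hstar * n = 1 := by
    rw [hhstar]; field_simp; ring
  have hs_fun : s = fun h => -y * η * min h hstar := funext hs
  refine ⟨⟨hs_fun ▸ by fun_prop, by simp [hs, hstar_pos.le]⟩,
    fun h _ hlt => ⟨?_, ?_⟩, fun h hgt => ⟨?_, ?_⟩⟩
  · rw [hs, min_eq_left hlt.le, margin_after_step hyy]
    have : η * h * n < η * hstar * n := by gcongr
    linarith
  · simpa [hs_fun, mul_comm] using (hasDerivAt_min_const_of_lt hlt).const_mul (-y * η)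
  · rw [hs, min_eq_right hgt.le, margin_after_step hyy, hmargin_star]
  · simpa [hs_fun] using (hasDerivAt_min_const_of_gt hgt).const_mul (-y * η)
end

section
/- Let f : ℝ → ℝ be Lipschitz continuous and let n ∈ ℝ. Suppose s : ℝ × [0, ∞) → ℝ is such that for every p ∈ ℝ, the function h ↦ s(p, h) is differentiable with s(p, 0) = 0 and ∂s/∂h (p, h) = f(p − n·s(p, h)) for all h ≥ 0. Then for all p ∈ ℝ and all a, b ≥ 0: s(p, a + b) = s(p, a) + s(p − n·s(p, a), b). -/
/-!
For fixed `p` and `a`, both `b ↦ s p (a + b)` and `b ↦ s p a + s (p - n * s p a) b` solve the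
autonomous equation `y' = f (p - n * y)` on `[0, ∞)` with the same initial value `s p a`.
The right-hand side is Lipschitz, so the two solutions coincide by uniqueness of ODE solutions.
-/

open Set

def IsForwardSolution (g y : ℝ → ℝ) : Prop :=
  ∀ t, 0 ≤ t → HasDerivWithinAt y (g (y t)) (Ici 0) t

namespace IsForwardSolution

variable {g y y₁ y₂ : ℝ → ℝ}

theorem continuousOn (hy : IsForwardSolution g y) : ContinuousOn y (Ici 0) :=
  fun t ht ↦ (hy t ht).continuousWithinAt

theorem comp_const_add (hy : IsForwardSolution g y) {a : ℝ} (ha : 0 ≤ a) :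
    IsForwardSolution g (fun t ↦ y (a + t)) := fun t ht ↦ by
  have hshift : MapsTo (a + ·) (Ici 0) (Ici 0) := fun x hx ↦ add_nonneg ha hx
  simpa [Function.comp_def] using (hy (a + t) (add_nonneg ha ht)).comp t
    ((hasDerivAt_id t).const_add a).hasDerivWithinAt hshift

theorem const_add {c : ℝ} (hy : IsForwardSolution (fun x ↦ g (c + x)) y) :
    IsForwardSolution g (fun t ↦ c + y t) :=
  fun t ht ↦ (hy t ht).const_add c

theorem eqOn {K : NNReal} (hg : LipschitzWith K g) (h₁ : IsForwardSolution g y₁)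
    (h₂ : IsForwardSolution g y₂) (h₀ : y₁ 0 = y₂ 0) : EqOn y₁ y₂ (Ici 0) := fun _ hb ↦
  ODE_solution_unique (v := fun _ ↦ g) (fun _ ↦ hg)
    (h₁.continuousOn.mono Icc_subset_Ici_self)
    (fun t ht ↦ (h₁ t ht.1).mono (Ici_subset_Ici.2 ht.1))
    (h₂.continuousOn.mono Icc_subset_Ici_self)
    (fun t ht ↦ (h₂ t ht.1).mono (Ici_subset_Ici.2 ht.1)) h₀ ⟨hb, le_rfl⟩

end IsForwardSolution

theorem LipschitzWith.comp_const_sub_mul {f : ℝ → ℝ} {K : NNReal} (hf : LipschitzWith K f)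
    (p n : ℝ) : LipschitzWith (K * ‖n‖₊) (fun x ↦ f (p - n * x)) := by
  have haffine : LipschitzWith ‖n‖₊ (fun x : ℝ ↦ p - n * x) := by
    refine LipschitzWith.of_dist_le_mul fun x y ↦ ?_
    rw [Real.dist_eq, Real.dist_eq, show p - n * x - (p - n * y) = n * (y - x) by ring, abs_mul,
      abs_sub_comm, coe_nnnorm, Real.norm_eq_abs]
  exact hf.comp haffine

/-- Invariance property: an update with importance weight `a + b` equals an update with
importance `a` followed by an update with importance `b`, for solutions of
`∂s/∂h (p, h) = f(p − n·s(p,h))`, `s(p, 0) = 0`, with `f` Lipschitz. -/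
theorem stmt_9 (f : ℝ → ℝ) (K : NNReal) (hf : LipschitzWith K f) (n : ℝ)
    (s : ℝ → ℝ → ℝ)
    (hs0 : ∀ p : ℝ, s p 0 = 0)
    (hderiv : ∀ (p : ℝ) (h : ℝ), 0 ≤ h →
      HasDerivWithinAt (s p) (f (p - n * s p h)) (Set.Ici 0) h) :
    ∀ (p a b : ℝ), 0 ≤ a → 0 ≤ b →
      s p (a + b) = s p a + s (p - n * s p a) b := by
  intro p a b ha hb
  have hsol : ∀ q, IsForwardSolution (fun x ↦ f (q - n * x)) (s q) := hderiv
  have hrestart : IsForwardSolution (fun x ↦ f (p - n * x))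
      (fun t ↦ s p a + s (p - n * s p a) t) :=
    IsForwardSolution.const_add (by simpa only [mul_add, sub_sub] using hsol (p - n * s p a))
  exact ((hsol p).comp_const_add ha).eqOn (hf.comp_const_sub_mul p n) hrestart
    (by simp [hs0]) hb
end

section
/- Let E be a real inner product space, x ∈ E nonzero, w ∈ E, y ∈ ℝ, η > 0, h ≥ 0, and set p = ⟨w, x⟩, n = ⟨x, x⟩ > 0. Let w' = w − s(h)·x where s(h) = ((p − y)/n)·(1 − exp(−h·η·n)). Then ⟨w', x⟩ − y = exp(−h·η·n)·(⟨w, x⟩ − y). In particular, if ⟨w, x⟩ − y ≠ 0 then (⟨w', x⟩ − y)/(⟨w, x⟩ − y) = exp(−h·η·n) > 0, so the importance-invariant squared-loss update is safe: the residual never changes sign, for any learning rate and importance weight. -/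
/-!
The update moves `w` along `x`, so it changes the prediction `⟪w, x⟫` by exactly `s(h)·⟪x, x⟫`,
and `s(h)·⟪x, x⟫` is the fraction `1 − exp(−hη⟪x, x⟫)` of the residual. What is left of the
residual is therefore the fraction `exp(−hη⟪x, x⟫)`, which is positive.
-/

open RealInnerProductSpace

/-- At `n = 0` both sides vanish, since then `1 - exp (-(c * n)) = 0`. -/
theorem div_mul_one_sub_exp_neg_mul_mul_self (r c n : ℝ) :
    r / n * (1 - Real.exp (-(c * n))) * n = r * (1 - Real.exp (-(c * n))) := by
  rcases eq_or_ne n 0 with rfl | hn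
  · simp
  · field_simp

theorem inner_sub_smul_self_sub {E : Type*} [NormedAddCommGroup E] [InnerProductSpace ℝ E]
    (w x : E) (a y : ℝ) : ⟪w - a • x, x⟫ - y = (⟪w, x⟫ - y) - a * ⟪x, x⟫ := by
  rw [inner_sub_left, real_inner_smul_left]
  ring

theorem inner_sub_smul_self_sub_eq_exp_mul {E : Type*} [NormedAddCommGroup E]
    [InnerProductSpace ℝ E] (w x : E) (y c : ℝ) :
    ⟪w - ((⟪w, x⟫ - y) / ⟪x, x⟫ * (1 - Real.exp (-(c * ⟪x, x⟫)))) • x, x⟫ - y =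
      Real.exp (-(c * ⟪x, x⟫)) * (⟪w, x⟫ - y) := by
  rw [inner_sub_smul_self_sub, div_mul_one_sub_exp_neg_mul_mul_self]
  ring

theorem stmt_10_general {E : Type*} [NormedAddCommGroup E] [InnerProductSpace ℝ E]
    (x w : E) (y η h : ℝ)
    (p n : ℝ) (hp : p = ⟪w, x⟫) (hn : n = ⟪x, x⟫)
    (w' : E)
    (hw' : w' = w - (((p - y) / n) * (1 - Real.exp (-(h * η * n)))) • x) :
    ⟪w', x⟫ - y = Real.exp (-(h * η * n)) * (⟪w, x⟫ - y) ∧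
    (⟪w, x⟫ - y ≠ 0 →
      (⟪w', x⟫ - y) / (⟪w, x⟫ - y) = Real.exp (-(h * η * n)) ∧
        0 < Real.exp (-(h * η * n))) := by
  subst hp hn hw'
  have residual := inner_sub_smul_self_sub_eq_exp_mul w x y (h * η)
  exact ⟨residual, fun hne => ⟨by rw [residual, mul_div_cancel_right₀ _ hne], Real.exp_pos _⟩⟩

/-- Safety of the importance-invariant squared-loss update: the residual shrinks by the
positive factor `exp(−hηn)`, hence it never changes sign. -/
theorem stmt_10 {E : Type*} [NormedAddCommGroup E] [InnerProductSpace ℝ E]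
    (x w : E) (hx : x ≠ 0) (y η h : ℝ) (hη : 0 < η) (hh : 0 ≤ h)
    (p n : ℝ) (hp : p = ⟪w, x⟫) (hn : n = ⟪x, x⟫)
    (w' : E)
    (hw' : w' = w - (((p - y) / n) * (1 - Real.exp (-(h * η * n)))) • x) :
    ⟪w', x⟫ - y = Real.exp (-(h * η * n)) * (⟪w, x⟫ - y) ∧
    (⟪w, x⟫ - y ≠ 0 →
      (⟪w', x⟫ - y) / (⟪w, x⟫ - y) = Real.exp (-(h * η * n)) ∧
        0 < Real.exp (-(h * η * n))) :=
  stmt_10_general x w y η h p n hp hn w' hw'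
end

section
/- Let E be a real inner product space, x ∈ E nonzero, w ∈ E, y ∈ {−1, 1}, η > 0, h ≥ 0, and set p = ⟨w, x⟩, n = ⟨x, x⟩ > 0. Suppose y·p ≤ 1. Let w' = w − s(h)·x where s(h) = −y·min(h·η, (1 − y·p)/n). Then y·⟨w', x⟩ ≤ 1, i.e., the importance-invariant hinge-loss update never overshoots the hinge, for any learning rate and importance weight. -/
/-!
Moving `w` along `x` by `y * t` changes the margin `y ⟪w, x⟫` by exactly `t ⟪x, x⟫`, since
`y² = 1`. The clipped step `t = min (h η) ((1 - y p) / ⟪x, x⟫)` is at most the step that brings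
the margin exactly to `1`, so the margin cannot overshoot the hinge.
-/

open RealInnerProductSpace

lemma min_div_mul_le (a : ℝ) {c n : ℝ} (hc : 0 ≤ c) (hn : 0 ≤ n) : min a (c / n) * n ≤ c := by
  calc min a (c / n) * n ≤ c / n * n := mul_le_mul_of_nonneg_right (min_le_right _ _) hn
    _ ≤ c := by
      rcases hn.eq_or_lt with rfl | hn
      · simpa using hc
      · rw [div_mul_cancel₀ _ hn.ne']

lemma mul_inner_add_mul_smul_self {E : Type*} [NormedAddCommGroup E] [InnerProductSpace ℝ E]
    (w x : E) {y : ℝ} (hy : y * y = 1) (t : ℝ) :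
    y * ⟪w + (y * t) • x, x⟫ = y * ⟪w, x⟫ + t * ⟪x, x⟫ := by
  rw [inner_add_left, real_inner_smul_left]
  linear_combination t * ⟪x, x⟫ * hy

theorem stmt_11_general {E : Type*} [NormedAddCommGroup E] [InnerProductSpace ℝ E]
    (x w : E) (y η h : ℝ) (hy : y = -1 ∨ y = 1)
    (p n : ℝ) (hp : p = ⟪w, x⟫) (hn : n = ⟪x, x⟫)
    (hyp : y * p ≤ 1)
    (w' : E)
    (hw' : w' = w - (-y * min (h * η) ((1 - y * p) / n)) • x) :
    y * ⟪w', x⟫ ≤ 1 := by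
  have hyy : y * y = 1 := by rcases hy with rfl | rfl <;> norm_num
  have hw'_add : w' = w + (y * min (h * η) ((1 - y * p) / n)) • x := by
    rw [hw', neg_mul, neg_smul, sub_neg_eq_add]
  have hstep : min (h * η) ((1 - y * p) / n) * n ≤ 1 - y * p :=
    min_div_mul_le _ (sub_nonneg.mpr hyp) (hn ▸ real_inner_self_nonneg)
  rw [hw'_add, mul_inner_add_mul_smul_self w x hyy, ← hp, ← hn]
  linarith

/-- Safety of the importance-invariant hinge-loss update: the margin never exceeds `1`
after the update, for any learning rate and importance weight. -/
theorem stmt_11 {E : Type*} [NormedAddCommGroup E] [InnerProductSpace ℝ E]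
    (x w : E) (hx : x ≠ 0) (y η h : ℝ) (hy : y = -1 ∨ y = 1)
    (hη : 0 < η) (hh : 0 ≤ h)
    (p n : ℝ) (hp : p = ⟪w, x⟫) (hn : n = ⟪x, x⟫)
    (hyp : y * p ≤ 1)
    (w' : E)
    (hw' : w' = w - (-y * min (h * η) ((1 - y * p) / n)) • x) :
    y * ⟪w', x⟫ ≤ 1 :=
  stmt_11_general x w y η h hy p n hp hn hyp w' hw'
end

section
/- Let E be a real inner product space, x ∈ E nonzero, w_t ∈ E, y ∈ ℝ, λ > 0, τ ∈ (0, 1), and set n = ⟨x, x⟩ > 0 and p = ⟨w_t, x⟩. Define the quantile loss ℓ_τ(q, y) = τ·(y − q) if y > q and (1 − τ)·(q − y) if y ≤ q. Then the function F(w) = (1/2)‖w − w_t‖² + λ·ℓ_τ(⟨w, x⟩, y) attains its global minimum over E at: w_t − λ·(1 − τ)·x if (p − y)/((1 − τ)·n) > λ; w_t + λ·τ·x if (y − p)/(τ·n) > λ; and w_t − ((p − y)/n)·x otherwise. -/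
/-!
The objective `½‖w − wₜ‖² + λ·ℓ(⟪w, x⟫)` is minimized at `w⋆ = wₜ − (λ g) • x` as soon as `g` is a
subgradient of `ℓ` at `⟪w⋆, x⟫`: expanding the square around `w⋆` leaves `½‖w − w⋆‖² ≥ 0` plus
`λ (ℓ ⟪w, x⟫ − ℓ ⟪w⋆, x⟫ − g (⟪w, x⟫ − ⟪w⋆, x⟫)) ≥ 0`. For the pinball loss the subgradients at `q`
are `1 − τ` for `q > y`, `−τ` for `q < y` and all of `[−τ, 1 − τ]` at `q = y`; the three cases of
the update are the three choices of `g` making `⟪w⋆, x⟫ = p − λ g ‖x‖²` consistent with this.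
-/

open RealInnerProductSpace

noncomputable def quantileLoss (τ y q : ℝ) : ℝ :=
  if y > q then τ * (y - q) else (1 - τ) * (q - y)

theorem quantileLoss_add_mul_sub_le {τ y g q₀ : ℝ} (hg : -τ ≤ g ∧ g ≤ 1 - τ)
    (hlt : q₀ < y → g = -τ) (hgt : y < q₀ → g = 1 - τ) (q : ℝ) :
    quantileLoss τ y q₀ + g * (q - q₀) ≤ quantileLoss τ y q := by
  unfold quantileLoss
  rcases lt_trichotomy q₀ y with h | rfl | h
  · rw [hlt h]
    split_ifs <;> nlinarith
  · split_ifs <;> nlinarith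
  · rw [hgt h]
    split_ifs <;> nlinarith

section Prox

variable {E : Type*} [NormedAddCommGroup E] [InnerProductSpace ℝ E]

theorem prox_objective_le_of_subgradient {ℓ : ℝ → ℝ} {x wt w' : E} {lam g : ℝ} (hlam : 0 ≤ lam)
    (hw' : w' = wt - (lam * g) • x) (hg : ∀ q, ℓ ⟪w', x⟫ + g * (q - ⟪w', x⟫) ≤ ℓ q) (w : E) :
    1 / 2 * ‖w' - wt‖ ^ 2 + lam * ℓ ⟪w', x⟫ ≤ 1 / 2 * ‖w - wt‖ ^ 2 + lam * ℓ ⟪w, x⟫ := by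
  have hsq : ‖w - wt‖ ^ 2 = ‖w - w'‖ ^ 2 + 2 * ⟪w - w', w' - wt⟫ + ‖w' - wt‖ ^ 2 := by
    rw [← norm_add_sq_real, sub_add_sub_cancel]
  have hcross : ⟪w - w', w' - wt⟫ = -(lam * g) * (⟪w, x⟫ - ⟪w', x⟫) := by
    rw [hw', sub_sub_cancel_left, inner_neg_right, real_inner_smul_right, inner_sub_left]
    ring
  have hloss := mul_le_mul_of_nonneg_left (hg ⟪w, x⟫) hlam
  nlinarith [sq_nonneg ‖w - w'‖]

theorem quantile_prox_le {x wt : E} {y lam τ g : ℝ} (hlam : 0 ≤ lam) (hg : -τ ≤ g ∧ g ≤ 1 - τ)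
    (hlt : ⟪wt, x⟫ - lam * g * ⟪x, x⟫ < y → g = -τ)
    (hgt : y < ⟪wt, x⟫ - lam * g * ⟪x, x⟫ → g = 1 - τ) (w : E) :
    1 / 2 * ‖wt - (lam * g) • x - wt‖ ^ 2 + lam * quantileLoss τ y ⟪wt - (lam * g) • x, x⟫ ≤
      1 / 2 * ‖w - wt‖ ^ 2 + lam * quantileLoss τ y ⟪w, x⟫ := by
  have hinner : ⟪wt - (lam * g) • x, x⟫ = ⟪wt, x⟫ - lam * g * ⟪x, x⟫ := by
    rw [inner_sub_left, real_inner_smul_left]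
  refine prox_objective_le_of_subgradient hlam rfl (fun q => ?_) w
  rw [hinner]
  exact quantileLoss_add_mul_sub_le hg hlt hgt q

end Prox

/-- Closed form of the implicit (proximal) update for the τ-quantile loss: depending on how
far the prediction is from the label, the minimizer of
`F(w) = ½‖w − wₜ‖² + λ·ℓ_τ(⟪w,x⟫, y)` is one of three explicit points. -/
theorem stmt_17 {E : Type*} [NormedAddCommGroup E] [InnerProductSpace ℝ E]
    (x wt : E) (hx : x ≠ 0) (y lam τ : ℝ) (hlam : 0 < lam)
    (hτ : τ ∈ Set.Ioo (0 : ℝ) 1)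
    (n p : ℝ) (hn : n = ⟪x, x⟫) (hp : p = ⟪wt, x⟫)
    (ℓτ : ℝ → ℝ)
    (hℓ : ∀ q : ℝ, ℓτ q = if y > q then τ * (y - q) else (1 - τ) * (q - y))
    (F : E → ℝ)
    (hF : ∀ w : E, F w = (1 / 2) * ‖w - wt‖ ^ 2 + lam * ℓτ ⟪w, x⟫) :
    ((p - y) / ((1 - τ) * n) > lam →
      ∀ w : E, F (wt - (lam * (1 - τ)) • x) ≤ F w) ∧
    ((y - p) / (τ * n) > lam →
      ∀ w : E, F (wt + (lam * τ) • x) ≤ F w) ∧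
    (¬ ((p - y) / ((1 - τ) * n) > lam) → ¬ ((y - p) / (τ * n) > lam) →
      ∀ w : E, F (wt - ((p - y) / n) • x) ≤ F w) := by
  obtain ⟨hτ0, hτ1⟩ := hτ
  obtain rfl : ℓτ = quantileLoss τ y := funext hℓ
  have hn0 : 0 < n := hn ▸ real_inner_self_pos.mpr hx
  have hτn : 0 < (1 - τ) * n := mul_pos (by linarith) hn0
  have hτn' : 0 < τ * n := mul_pos hτ0 hn0
  simp only [hF]
  subst hn hp
  refine ⟨fun h w => ?_, fun h w => ?_, fun h₁ h₂ w => ?_⟩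
  · rw [gt_iff_lt, lt_div_iff₀ hτn] at h
    exact quantile_prox_le hlam.le ⟨by linarith, le_rfl⟩ (fun _ => by linarith) (fun _ => rfl) w
  · rw [gt_iff_lt, lt_div_iff₀ hτn'] at h
    have hpt : wt + (lam * τ) • x = wt - (lam * -τ) • x := by
      rw [mul_neg, neg_smul, sub_neg_eq_add]
    rw [hpt]
    exact quantile_prox_le hlam.le ⟨le_rfl, by linarith⟩ (fun _ => rfl) (fun _ => by linarith) w
  · rw [gt_iff_lt, not_lt, div_le_iff₀ hτn] at h₁
    rw [gt_iff_lt, not_lt, div_le_iff₀ hτn'] at h₂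
    have hpt : (⟪wt, x⟫ - y) / ⟪x, x⟫ = lam * ((⟪wt, x⟫ - y) / (lam * ⟪x, x⟫)) := by field_simp
    have hpred : ⟪wt, x⟫ - lam * ((⟪wt, x⟫ - y) / (lam * ⟪x, x⟫)) * ⟪x, x⟫ = y := by
      field_simp; ring
    rw [hpt]
    refine quantile_prox_le hlam.le ⟨?_, ?_⟩ (by rw [hpred]; simp) (by rw [hpred]; simp) w
    · rw [le_div_iff₀ (by positivity)]; linarith
    · rw [div_le_iff₀ (by positivity)]; linarith
end

section
/- Let E be a real inner product space, x ∈ E nonzero, w_t ∈ E, y ∈ {−1, 1}, λ > 0, and set n = ⟨x, x⟩ > 0 and p = ⟨w_t, x⟩. Suppose y·p ≤ 1. Then the function F(w) = (1/2)‖w − w_t‖² + λ·max(0, 1 − y·⟨w, x⟩) attains its global minimum over E at w* = w_t + y·min(λ, (1 − y·p)/n)·x. -/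
open RealInnerProductSpace

/-!
With `u = y • x` the hinge term is `max 0 (1 - ⟪w, u⟫)` and `‖u‖² = n`. A point `b` minimises
`½‖w - a‖² + g w` as soon as `a - b` is a subgradient of `g` at `b`. For `b = a + t • u` with
`t = min λ ((1 - ⟪a, u⟫) / ‖u‖²)` this holds for `g = λ · hinge`: since `0 ≤ t ≤ λ`, the vector
`-t • u` lies in `λ` times the subdifferential `[0, 1] • (-u)` of the hinge, because either
`t = λ` and the margin `1 - ⟪b, u⟫` is still nonnegative, or `t < λ` and that margin is zero.
-/

section

variable {E : Type*} [NormedAddCommGroup E] [InnerProductSpace ℝ E]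

theorem half_sq_norm_sub_add_le_of_subgradient {g : E → ℝ} {a b : E}
    (hg : ∀ w, g b + ⟪a - b, w - b⟫ ≤ g w) (w : E) :
    1 / 2 * ‖b - a‖ ^ 2 + g b ≤ 1 / 2 * ‖w - a‖ ^ 2 + g w := by
  have hexpand : ‖w - a‖ ^ 2 = ‖w - b‖ ^ 2 + 2 * ⟪w - b, b - a⟫ + ‖b - a‖ ^ 2 := by
    rw [← norm_add_sq_real, sub_add_sub_cancel]
  have hsub : ⟪a - b, w - b⟫ = -⟪w - b, b - a⟫ := by
    rw [real_inner_comm, ← inner_neg_right, neg_sub]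
  nlinarith [hg w, sq_nonneg ‖w - b‖]

theorem hinge_subgradient {u b : E} {lam t : ℝ} (ht : 0 ≤ t) (htlam : t ≤ lam)
    (hslack : lam * max 0 (1 - ⟪b, u⟫) = t * (1 - ⟪b, u⟫)) (w : E) :
    lam * max 0 (1 - ⟪b, u⟫) - t * ⟪w - b, u⟫ ≤ lam * max 0 (1 - ⟪w, u⟫) :=
  calc lam * max 0 (1 - ⟪b, u⟫) - t * ⟪w - b, u⟫ = t * (1 - ⟪w, u⟫) := by
        rw [hslack, inner_sub_left]; ring
    _ ≤ t * max 0 (1 - ⟪w, u⟫) := mul_le_mul_of_nonneg_left (le_max_right _ _) ht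
    _ ≤ lam * max 0 (1 - ⟪w, u⟫) := mul_le_mul_of_nonneg_right htlam (le_max_left _ _)

theorem inner_add_smul_self_left (a u : E) (t : ℝ) :
    ⟪a + t • u, u⟫ = ⟪a, u⟫ + t * ‖u‖ ^ 2 := by
  rw [inner_add_left, real_inner_smul_left, real_inner_self_eq_norm_sq]

theorem hinge_complementary_slackness {a u : E} (hu : u ≠ 0) (lam : ℝ) :
    let t := min lam ((1 - ⟪a, u⟫) / ‖u‖ ^ 2)
    lam * max 0 (1 - ⟪a + t • u, u⟫) = t * (1 - ⟪a + t • u, u⟫) := by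
  intro t
  have hu2 : 0 < ‖u‖ ^ 2 := by positivity
  rw [inner_add_smul_self_left]
  rcases le_total lam ((1 - ⟪a, u⟫) / ‖u‖ ^ 2) with hle | hle
  · have hmargin : 0 ≤ 1 - (⟪a, u⟫ + lam * ‖u‖ ^ 2) := by
      rw [le_div_iff₀ hu2] at hle; linarith
    rw [show t = lam from min_eq_left hle, max_eq_right hmargin]
  · have hmargin : 1 - (⟪a, u⟫ + t * ‖u‖ ^ 2) = 0 := by
      rw [show t = _ from min_eq_right hle]; field_simp; ring
    rw [hmargin, max_self, mul_zero, mul_zero]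

noncomputable def hingeProxObjective (lam : ℝ) (a u w : E) : ℝ :=
  1 / 2 * ‖w - a‖ ^ 2 + lam * max 0 (1 - ⟪w, u⟫)

theorem hingeProxObjective_min_le {a u : E} (hu : u ≠ 0) {lam : ℝ} (hlam : 0 ≤ lam)
    (hmargin : ⟪a, u⟫ ≤ 1) (w : E) :
    hingeProxObjective lam a u (a + min lam ((1 - ⟪a, u⟫) / ‖u‖ ^ 2) • u) ≤
      hingeProxObjective lam a u w := by
  set t := min lam ((1 - ⟪a, u⟫) / ‖u‖ ^ 2)
  have ht : 0 ≤ t := le_min hlam (div_nonneg (by linarith) (by positivity))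
  have hsubgrad (v : E) :
      lam * max 0 (1 - ⟪a + t • u, u⟫) + ⟪a - (a + t • u), v - (a + t • u)⟫ ≤
        lam * max 0 (1 - ⟪v, u⟫) := by
    rw [sub_add_cancel_left, inner_neg_left, real_inner_smul_left, real_inner_comm (v - _) u]
    linarith [hinge_subgradient ht (min_le_left _ _) (hinge_complementary_slackness hu lam) v]
  exact half_sq_norm_sub_add_le_of_subgradient (g := fun v ↦ lam * max 0 (1 - ⟪v, u⟫))
    hsubgrad w

end

/-- Closed form of the implicit (proximal) update for the hinge loss (the PA-I update):
`F(w) = ½‖w − wₜ‖² + λ·max(0, 1 − y⟪w,x⟫)` attains its global minimum at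
`wₜ + y·min(λ, (1 − yp)/n) • x`. -/
theorem stmt_18 {E : Type*} [NormedAddCommGroup E] [InnerProductSpace ℝ E]
    (x wt : E) (hx : x ≠ 0) (y lam : ℝ) (hy : y = -1 ∨ y = 1) (hlam : 0 < lam)
    (n p : ℝ) (hn : n = ⟪x, x⟫) (hp : p = ⟪wt, x⟫)
    (hyp : y * p ≤ 1)
    (F : E → ℝ)
    (hF : ∀ w : E, F w = (1 / 2) * ‖w - wt‖ ^ 2 + lam * max 0 (1 - y * ⟪w, x⟫)) :
    ∀ w : E, F (wt + (y * min lam ((1 - y * p) / n)) • x) ≤ F w := by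
  have hy0 : y ≠ 0 := by rcases hy with rfl | rfl <;> norm_num
  have hF' (w : E) : F w = hingeProxObjective lam wt (y • x) w := by
    rw [hF, hingeProxObjective, real_inner_smul_right]
  have hyp' : y * p = ⟪wt, y • x⟫ := by rw [hp, real_inner_smul_right]
  have hn' : n = ‖y • x‖ ^ 2 := by
    rw [hn, norm_smul, mul_pow, Real.norm_eq_abs, sq_abs, real_inner_self_eq_norm_sq]
    rcases hy with rfl | rfl <;> norm_num
  intro w
  rw [hF', hF', mul_comm, ← smul_smul, hyp', hn']
  exact hingeProxObjective_min_le (smul_ne_zero hy0 hx) hlam.le (hyp' ▸ hyp) w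
end

section
/- Let p ∈ ℝ, n > 0, η > 0, H > 0, and let g : ℝ → ℝ be continuous. Suppose s : [0, H] → ℝ is differentiable with s(0) = 0 and s'(h) = η·g(p − s(h)·n) for all h ∈ [0, H], and suppose g(p − u·n) > 0 for all u in the interval between 0 and s(H). Then for every h ∈ [0, H]: h = (1/η)·∫_0^{s(h)} du / g(p − u·n). -/
/-!
The function `s` cannot leave `[0, s H]`: at either end of that interval its derivative
`η g(p - s n)` is positive, so `s` can neither drop below `0 = s 0` nor, having exceeded `s H`,
return to the value `s H` at time `H`. Along the path `1 / (η g(p - s n))` is therefore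
defined, and the substitution `u = s(h)` turns `∫₀^{s(h)} du / (η g(p - u n))` into
`∫₀^h s'/(η g(p - s n)) = h`.
-/

open Set

theorem const_le_image_of_deriv_pos_at_level {f f' : ℝ → ℝ} {a b c : ℝ}
    (hf : ∀ x ∈ Icc a b, HasDerivWithinAt f (f' x) (Icc a b) x) (ha : c ≤ f a)
    (hc : ∀ x ∈ Ico a b, f x = c → 0 < f' x) : ∀ x ∈ Icc a b, c ≤ f x := by
  have key := image_le_of_deriv_right_lt_deriv_boundary' (f := fun x => -f x)
    (f' := fun x => -f' x) (B := fun _ => -c) (B' := fun _ => 0)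
    (fun x hx => (hf x hx).continuousWithinAt.neg)
    (fun x hx => ((hf x (Ico_subset_Icc_self hx)).mono_of_mem_nhdsWithin
      (Icc_mem_nhdsGE_of_mem hx)).neg)
    (neg_le_neg ha) continuousOn_const (fun x _ => hasDerivWithinAt_const x _ _)
    (fun x hx hfx => neg_neg_of_pos (hc x hx (neg_inj.mp hfx)))
  exact fun x hx => neg_le_neg_iff.mp (key hx)

theorem image_le_const_of_deriv_pos_at_level {f f' : ℝ → ℝ} {a b c : ℝ}
    (hf : ∀ x ∈ Icc a b, HasDerivWithinAt f (f' x) (Icc a b) x) (hb : f b ≤ c)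
    (hc : ∀ x ∈ Ioc a b, f x = c → 0 < f' x) : ∀ x ∈ Icc a b, f x ≤ c := by
  have hreflect : ∀ y ∈ Icc (-b) (-a),
      HasDerivWithinAt (fun y => -f (-y)) (f' (-y)) (Icc (-b) (-a)) y := by
    intro y hy
    have hmaps : MapsTo Neg.neg (Icc (-b) (-a)) (Icc a b) := fun z hz => by
      simp only [mem_Icc] at hz ⊢; constructor <;> linarith [hz.1, hz.2]
    exact ((hf (-y) (hmaps hy)).comp y (hasDerivWithinAt_neg y _) hmaps).neg.congr_deriv (by ring)
  have key := const_le_image_of_deriv_pos_at_level hreflect (c := -c) (by simpa using hb)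
    (fun y hy hfy => hc (-y) ⟨by linarith [hy.2], by linarith [hy.1]⟩ (neg_inj.mp hfy))
  intro x hx
  simpa using key (-x) ⟨by linarith [hx.2], by linarith [hx.1]⟩

theorem mapsTo_Icc_of_deriv_pos_at_endpoint_values {f f' : ℝ → ℝ} {a b : ℝ}
    (hf : ∀ x ∈ Icc a b, HasDerivWithinAt f (f' x) (Icc a b) x)
    (ha : ∀ x ∈ Icc a b, f x = f a → 0 < f' x)
    (hb : ∀ x ∈ Icc a b, f x = f b → 0 < f' x) :
    MapsTo f (Icc a b) (Icc (f a) (f b)) := fun x hx =>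
  ⟨const_le_image_of_deriv_pos_at_level hf le_rfl
      (fun y hy => ha y (Ico_subset_Icc_self hy)) x hx,
    image_le_const_of_deriv_pos_at_level hf le_rfl
      (fun y hy => hb y (Ioc_subset_Icc_self hy)) x hx⟩

theorem integral_inv_eq_sub_of_hasDerivWithinAt {s F : ℝ → ℝ} {a b : ℝ} (hab : a ≤ b)
    (hs : ∀ x ∈ Icc a b, HasDerivWithinAt s (F (s x)) (Icc a b) x)
    (hF : ContinuousOn F (s '' Icc a b)) (hF0 : ∀ x ∈ Icc a b, F (s x) ≠ 0) :
    ∫ u in s a..s b, (F u)⁻¹ = b - a := by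
  have hs_cont : ContinuousOn s (Icc a b) := fun x hx => (hs x hx).continuousWithinAt
  have hF_inv : ContinuousOn (fun u => (F u)⁻¹) (s '' Icc a b) :=
    hF.inv₀ (by rintro _ ⟨x, hx, rfl⟩; exact hF0 x hx)
  have hFs : ContinuousOn (F ∘ s) (Icc a b) := hF.comp hs_cont (mapsTo_image s _)
  rw [← uIcc_of_le hab] at hs_cont hF_inv hFs
  have hchange := intervalIntegral.integral_comp_mul_deriv'' hs_cont
    (f' := F ∘ s) (fun x hx => by
      rw [min_eq_left hab, max_eq_right hab] at hx
      exact ((hs x (Ioo_subset_Icc_self hx)).hasDerivAt (Icc_mem_nhds hx.1 hx.2)).hasDerivWithinAt)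
    hFs hF_inv
  rw [← hchange, intervalIntegral.integral_congr (g := fun _ => 1),
    intervalIntegral.integral_const, smul_eq_mul, mul_one]
  intro x hx
  rw [uIcc_of_le hab] at hx
  exact inv_mul_cancel₀ (hF0 x hx)

theorem stmt_19_general (p n η H : ℝ) (hη : 0 < η)
    (g : ℝ → ℝ) (hg : Continuous g)
    (s : ℝ → ℝ) (hs0 : s 0 = 0)
    (hderiv : ∀ h ∈ Set.Icc (0 : ℝ) H,
      HasDerivWithinAt s (η * g (p - s h * n)) (Set.Icc (0 : ℝ) H) h)
    (hpos : ∀ u ∈ Set.uIcc (0 : ℝ) (s H), 0 < g (p - u * n)) :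
    ∀ h ∈ Set.Icc (0 : ℝ) H,
      h = (1 / η) * ∫ u in (0 : ℝ)..(s h), 1 / g (p - u * n) := by
  have hrange : MapsTo s (Icc 0 H) (uIcc 0 (s H)) := by
    have hbarrier := mapsTo_Icc_of_deriv_pos_at_endpoint_values hderiv ?_ ?_
    · rw [hs0] at hbarrier
      exact hbarrier.mono_right Icc_subset_uIcc
    · intro x _ hx
      rw [hx, hs0]
      exact mul_pos hη (hpos 0 left_mem_uIcc)
    · intro x _ hx
      rw [hx]
      exact mul_pos hη (hpos (s H) right_mem_uIcc)
  intro h hh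
  have hsub : Icc 0 h ⊆ Icc 0 H := Icc_subset_Icc_right hh.2
  have hsep := integral_inv_eq_sub_of_hasDerivWithinAt (F := fun u => η * g (p - u * n)) hh.1
    (fun x hx => (hderiv x (hsub hx)).mono hsub) (by fun_prop)
    (fun x hx => (mul_pos hη (hpos _ (hrange (hsub hx)))).ne')
  simp only [mul_inv, intervalIntegral.integral_const_mul, hs0, sub_zero] at hsep
  simpa only [one_div] using hsep.symm

/-- Separation of variables for the importance-invariant ODE: the importance weight `h` is
recovered from the scaling `s(h)` by the integral formula
`h = (1/η) ∫₀^{s(h)} du / g(p − u·n)`, provided `g` is positive along the path. -/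
theorem stmt_19 (p n η H : ℝ) (hn : 0 < n) (hη : 0 < η) (hH : 0 < H)
    (g : ℝ → ℝ) (hg : Continuous g)
    (s : ℝ → ℝ) (hs0 : s 0 = 0)
    (hderiv : ∀ h ∈ Set.Icc (0 : ℝ) H,
      HasDerivWithinAt s (η * g (p - s h * n)) (Set.Icc (0 : ℝ) H) h)
    (hpos : ∀ u ∈ Set.uIcc (0 : ℝ) (s H), 0 < g (p - u * n)) :
    ∀ h ∈ Set.Icc (0 : ℝ) H,
      h = (1 / η) * ∫ u in (0 : ℝ)..(s h), 1 / g (p - u * n) :=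
  stmt_19_general p n η H hη g hg s hs0 hderiv hpos
end
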